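/- arXiv:1307.5577 — 2 statements merged into one kernel-verified Lean document; each statement's English description precedes it below -/
import Mathlib

section
/- Let ω = (ω₀, …, ω_{n+1}) be a key sequence, with d_k and α_k as in its definition. Then for each k with 1 ≤ k ≤ n there exists a unique tuple of integers (β_{k,0}, β_{k,1}, …, β_{k,k−1}) such that 0 ≤ β_{k,j} < α_j for all 1 ≤ j ≤ k−1 (β_{k,0} ∈ ℤ is unrestricted and may be negative) and α_k·ω_k = Σ_{j=0}^{k−1} β_{k,j}·ω_j. -/
/-- `dks ω k` is `gcd(|ω₀|, …, |ω_k|)`. -/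
def dks (ω : ℕ → ℤ) (k : ℕ) : ℕ :=
  (Finset.range (k + 1)).gcd fun j => (ω j).natAbs

/-- `alphaK ω k` is `α_k = d_{k−1}/d_k`. -/
def alphaK (ω : ℕ → ℤ) (k : ℕ) : ℕ := dks ω (k - 1) / dks ω k

/-- A key sequence `(ω₀, …, ω_{n+1})`: `ω₀ ≥ 1`, `d_{n+1} = 1`, and
`ω_{k+1} < α_k·ω_k` for `1 ≤ k ≤ n`. -/
def IsKeySequence (n : ℕ) (ω : ℕ → ℤ) : Prop :=
  1 ≤ ω 0 ∧ dks ω (n + 1) = 1 ∧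
    ∀ k, 1 ≤ k → k ≤ n → ω (k + 1) < (alphaK ω k : ℤ) * ω k

lemma dks_dvd (ω : ℕ → ℤ) {j k : ℕ} (h : j ≤ k) : (dks ω k : ℤ) ∣ ω j := by
  rw [Int.natCast_dvd]
  exact Finset.gcd_dvd (Finset.mem_range.2 (Nat.lt_succ_of_le h))

lemma dks_pos (ω : ℕ → ℤ) (h0 : 1 ≤ ω 0) (k : ℕ) : 0 < dks ω k := by
  rcases Nat.eq_zero_or_pos (dks ω k) with h | h
  · exfalso
    have := dks_dvd ω (Nat.zero_le k)
    rw [h] at this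
    simp at this
    omega
  · exact h

lemma dks_succ (ω : ℕ → ℤ) (k : ℕ) :
    dks ω (k + 1) = Nat.gcd (ω (k + 1)).natAbs (dks ω k) := by
  rw [dks, Finset.range_add_one, Finset.gcd_insert]
  rfl

lemma dks_succ_dvd (ω : ℕ → ℤ) (k : ℕ) : dks ω (k + 1) ∣ dks ω k := by
  rw [dks_succ]; exact Nat.gcd_dvd_right _ _

lemma alphaK_mul (ω : ℕ → ℤ) (k : ℕ) :
    alphaK ω (k + 1) * dks ω (k + 1) = dks ω k := by
  unfold alphaK
  simp only [Nat.add_sub_cancel]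
  exact Nat.div_mul_cancel (dks_succ_dvd ω k)

/-- Existence and uniqueness of a digit `c` with `0 ≤ c < α_{k+1}` and
`d_k ∣ x - c·ω_{k+1}`. -/
lemma digit_lemma (ω : ℕ → ℤ) (h0 : 1 ≤ ω 0) (k : ℕ) (x : ℤ)
    (hx : (dks ω (k + 1) : ℤ) ∣ x) :
    ∃! c : ℤ, (0 ≤ c ∧ c < (alphaK ω (k + 1) : ℤ)) ∧
      (dks ω k : ℤ) ∣ x - c * ω (k + 1) := by
  set D' : ℤ := (dks ω (k + 1) : ℤ) with hD'
  set a : ℤ := (alphaK ω (k + 1) : ℤ) with ha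
  have hD'pos : 0 < D' := by rw [hD']; exact_mod_cast dks_pos ω h0 (k + 1)
  have hDk : (dks ω k : ℤ) = a * D' := by
    rw [ha, hD', ← Nat.cast_mul, alphaK_mul]
  have hapos : 0 < a := by
    rcases Nat.eq_zero_or_pos (alphaK ω (k + 1)) with h | h
    · exfalso
      have := dks_pos ω h0 k
      rw [← alphaK_mul ω k, h] at this
      simp at this
    · rw [ha]; exact_mod_cast h
  obtain ⟨y, hy⟩ := hx
  obtain ⟨m, hm⟩ : D' ∣ ω (k + 1) := by
    rw [hD', Int.natCast_dvd]
    exact Finset.gcd_dvd (Finset.mem_range.2 (Nat.lt_succ_self _))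
  have hcop : IsCoprime a m := by
    rw [Int.isCoprime_iff_gcd_eq_one]
    have hgcd : Int.gcd ((dks ω k : ℤ)) (ω (k + 1)) = dks ω (k + 1) := by
      rw [Int.gcd]
      simp only [Int.natAbs_natCast]
      rw [Nat.gcd_comm, ← dks_succ]
    rw [hDk, hm] at hgcd
    rw [show D' * m = m * D' by ring, Int.gcd_mul_right] at hgcd
    have hD'abs : D'.natAbs = dks ω (k + 1) := by rw [hD', Int.natAbs_natCast]
    rw [hD'abs] at hgcd
    have hpos := dks_pos ω h0 (k + 1)
    have : Int.gcd a m * dks ω (k + 1) = 1 * dks ω (k + 1) := by rw [one_mul]; exact hgcd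
    exact Nat.eq_of_mul_eq_mul_right hpos this
  have hcond : ∀ c : ℤ, ((dks ω k : ℤ) ∣ x - c * ω (k + 1)) ↔ a ∣ y - c * m := by
    intro c
    rw [hDk, hy, hm, show D' * y - c * (D' * m) = D' * (y - c * m) by ring,
      mul_comm a D']
    exact mul_dvd_mul_iff_left (ne_of_gt hD'pos)
  obtain ⟨u, v, huv⟩ := hcop
  have hane : a ≠ 0 := ne_of_gt hapos
  refine ⟨(y * v) % a, ⟨⟨Int.emod_nonneg _ hane, Int.emod_lt_of_pos _ hapos⟩, ?_⟩, ?_⟩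
  · rw [hcond]
    refine ⟨y * u + (y * v / a) * m, ?_⟩
    rw [Int.emod_def]
    linear_combination (-y) * huv
  · rintro c' ⟨⟨hc0, hc1⟩, hcd⟩
    rw [hcond] at hcd
    have hcd0 : a ∣ y - ((y * v) % a) * m := by
      refine ⟨y * u + (y * v / a) * m, ?_⟩
      rw [Int.emod_def]
      linear_combination (-y) * huv
    have hdiff : a ∣ (c' - (y * v) % a) * m := by
      have := dvd_sub hcd0 hcd
      have heq : (y - ((y * v) % a) * m) - (y - c' * m) = (c' - (y * v) % a) * m := by ring
      rwa [heq] at this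
    have hcop' : IsCoprime a m := ⟨u, v, huv⟩
    have hdvd : a ∣ c' - (y * v) % a := hcop'.dvd_of_dvd_mul_right hdiff
    have h0' : 0 ≤ (y * v) % a := Int.emod_nonneg _ hane
    have h1' : (y * v) % a < a := Int.emod_lt_of_pos _ hapos
    have : c' - (y * v) % a = 0 := by
      refine Int.eq_zero_of_abs_lt_dvd hdvd ?_
      rw [abs_lt]
      constructor <;> omega
    omega

/-- Every integer divisible by `d_k` has a unique representation
`x = ∑_{j=0}^{k} β_j ω_j` with `0 ≤ β_j < α_j` for `1 ≤ j ≤ k`. -/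
lemma rep (ω : ℕ → ℤ) (h0 : 1 ≤ ω 0) (k : ℕ) :
    ∀ x : ℤ, (dks ω k : ℤ) ∣ x →
      ∃! β : Fin (k + 1) → ℤ,
        (∀ j : Fin (k + 1), 1 ≤ (j : ℕ) → 0 ≤ β j ∧ β j < (alphaK ω (j : ℕ) : ℤ)) ∧
          x = ∑ j : Fin (k + 1), β j * ω (j : ℕ) := by
  induction k with
  | zero =>
    intro x hx
    have hd0 : (dks ω 0 : ℤ) = ω 0 := by
      have h1 : dks ω 0 = (ω 0).natAbs := by
        simp [dks, Finset.range_one]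
      rw [h1, Int.natCast_natAbs, abs_of_pos (by omega)]
    rw [hd0] at hx
    obtain ⟨t, ht⟩ := hx
    refine ⟨fun _ => t, ⟨?_, ?_⟩, ?_⟩
    · intro j hj
      have := j.isLt
      omega
    · rw [Fin.sum_univ_one]
      simpa [mul_comm] using ht
    · rintro γ ⟨_, hγs⟩
      rw [Fin.sum_univ_one] at hγs
      funext j
      have hj : j = 0 := by
        have := j.isLt
        exact Fin.ext (by omega)
      subst hj
      have hω0 : ω 0 ≠ 0 := by omega
      simp only [Fin.val_zero] at hγs
      have : γ 0 * ω 0 = t * ω 0 := by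
        rw [← hγs, ht]; ring
      exact mul_right_cancel₀ hω0 this
  | succ k ih =>
    intro x hx
    obtain ⟨c, ⟨⟨hc0, hc1⟩, hcd⟩, hcu⟩ := digit_lemma ω h0 k x hx
    obtain ⟨β', ⟨hβ'b, hβ's⟩, hβ'u⟩ := ih (x - c * ω (k + 1)) hcd
    refine ⟨Fin.snoc β' c, ⟨?_, ?_⟩, ?_⟩
    · intro j
      induction j using Fin.lastCases with
      | last =>
        intro _
        simpa [Fin.snoc_last, Fin.val_last] using And.intro hc0 hc1
      | cast i =>
        intro hi
        have hi' : 1 ≤ (i : ℕ) := by simpa using hi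
        simpa [Fin.snoc_castSucc, Fin.coe_castSucc] using hβ'b i hi'
    · rw [Fin.sum_univ_castSucc]
      simp only [Fin.snoc_castSucc, Fin.snoc_last, Fin.coe_castSucc, Fin.val_last]
      linarith [hβ's]
    · rintro γ ⟨hγb, hγs⟩
      set c' := γ (Fin.last (k + 1)) with hc'
      have hc'b : 0 ≤ c' ∧ c' < (alphaK ω (k + 1) : ℤ) := by
        have := hγb (Fin.last (k + 1)) (by simp [Fin.val_last])
        simpa [Fin.val_last] using this
      have hsum' : x - c' * ω (k + 1) = ∑ i : Fin (k + 1), γ i.castSucc * ω (i : ℕ) := by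
        rw [Fin.sum_univ_castSucc] at hγs
        simp only [Fin.coe_castSucc, Fin.val_last] at hγs
        linarith
      have hdvd' : (dks ω k : ℤ) ∣ x - c' * ω (k + 1) := by
        rw [hsum']
        exact Finset.dvd_sum fun i _ =>
          dvd_mul_of_dvd_right (dks_dvd ω (Nat.lt_succ_iff.mp i.isLt)) _
      have hc'c : c' = c := hcu c' ⟨⟨hc'b.1, hc'b.2⟩, hdvd'⟩
      have hγ' : (fun i : Fin (k + 1) => γ i.castSucc) = β' := by
        refine hβ'u _ ⟨?_, ?_⟩
        · intro i hi
          have := hγb i.castSucc (by simpa using hi)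
          simpa using this
        · rw [← hc'c]
          exact hsum'
      funext j
      induction j using Fin.lastCases with
      | last => rw [Fin.snoc_last, ← hc', hc'c]
      | cast i =>
        rw [Fin.snoc_castSucc, ← hγ']

/-- For each `1 ≤ k ≤ n` there is a unique tuple `(β_{k,0}, …, β_{k,k−1})` of integers
with `0 ≤ β_{k,j} < α_j` for `1 ≤ j ≤ k−1` (no constraint on `β_{k,0}`) and
`α_k·ω_k = Σ_{j=0}^{k−1} β_{k,j}·ω_j`. -/
theorem stmt0 (n : ℕ) (ω : ℕ → ℤ) (hω : IsKeySequence n ω)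
    (k : ℕ) (hk1 : 1 ≤ k) (hkn : k ≤ n) :
    ∃! β : Fin k → ℤ,
      (∀ j : Fin k, 1 ≤ (j : ℕ) → 0 ≤ β j ∧ β j < (alphaK ω (j : ℕ) : ℤ)) ∧
        (alphaK ω k : ℤ) * ω k = ∑ j : Fin k, β j * ω (j : ℕ) := by
  obtain ⟨m, rfl⟩ : ∃ m, k = m + 1 := ⟨k - 1, by omega⟩
  have hd : (dks ω m : ℤ) = (alphaK ω (m + 1) : ℤ) * (dks ω (m + 1) : ℤ) := by
    exact_mod_cast (alphaK_mul ω m).symm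
  have hx : (dks ω m : ℤ) ∣ (alphaK ω (m + 1) : ℤ) * ω (m + 1) := by
    rw [hd]
    exact mul_dvd_mul_left _ (dks_dvd ω le_rfl)
  exact rep ω hω.1 m _ hx
end

section
/- Let ω = (ω₀, …, ω_{n+1}) be a primitive key sequence and θ ∈ (ℂ*)ⁿ. In the polynomial ring Â := ℂ[ŵ, ŷ₁, …, ŷ_{n+1}], let Î be the ideal generated by Ĝ₁, …, Ĝ_n, where Ĝ_k := ŵ^{α_k·ω_k − ω_{k+1}}·ŷ_{k+1} − ( ŷ_k^{α_k} − θ_k·∏_{j=1}^{k−1} ŷ_j^{β_{k,j}} ) (the exponent α_k·ω_k − ω_{k+1} is a positive integer by the definition of key sequence, and the product is empty for k = 1). Then the localization of Â/Î at the image of ŵ is isomorphic as a ℂ-algebra to ℂ[ŵ, ŵ⁻¹, ŷ₁], the ring of Laurent polynomials in ŵ that are polynomial in ŷ₁. -/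
/-- A key sequence is primitive iff `ω_{n+1} > 0`. -/
def IsPrimitive (n : ℕ) (ω : ℕ → ℤ) : Prop := 0 < ω (n + 1)

/-- `β k` is, for `1 ≤ k ≤ n`, the unique representation tuple of `α_k·ω_k`. -/
def IsRepTuple (n : ℕ) (ω : ℕ → ℤ) (β : ℕ → ℕ → ℤ) : Prop :=
  ∀ k, 1 ≤ k → k ≤ n →
    (∀ j, 1 ≤ j → j < k → 0 ≤ β k j ∧ β k j < (alphaK ω j : ℤ)) ∧
      (alphaK ω k : ℤ) * ω k = ∑ j ∈ Finset.range k, β k j * ω j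

open Fin.NatCast in
/-- The polynomial `Ĝ_k = ŵ^{α_k·ω_k − ω_{k+1}}·ŷ_{k+1} − (ŷ_k^{α_k} − θ_k·∏_{j=1}^{k−1} ŷ_j^{β_{k,j}})`
in `Â = ℂ[ŵ, ŷ₁, …, ŷ_{n+1}]`, where `ŵ` is the variable of index `0` and `ŷ_j` the
variable of index `j`. -/
noncomputable def Ghat (n : ℕ) (ω : ℕ → ℤ) (θ : ℕ → ℂ) (β : ℕ → ℕ → ℤ) (k : ℕ) :
    MvPolynomial (Fin (n + 2)) ℂ :=
  MvPolynomial.X (0 : Fin (n + 2)) ^ (((alphaK ω k : ℤ) * ω k - ω (k + 1)).toNat) *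
      MvPolynomial.X ((k + 1 : ℕ) : Fin (n + 2)) -
    (MvPolynomial.X ((k : ℕ) : Fin (n + 2)) ^ alphaK ω k -
      MvPolynomial.C (θ k) *
        ∏ j ∈ Finset.Ico 1 k, MvPolynomial.X ((j : ℕ) : Fin (n + 2)) ^ (β k j).toNat)

/-- The ideal `Î = (Ĝ₁, …, Ĝ_n) ⊆ Â`. -/
noncomputable def Ihat (n : ℕ) (ω : ℕ → ℤ) (θ : ℕ → ℂ) (β : ℕ → ℕ → ℤ) :
    Ideal (MvPolynomial (Fin (n + 2)) ℂ) :=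
  Ideal.span (Ghat n ω θ β '' Set.Icc 1 n)


namespace LaurentPolynomial

variable {R A : Type*} [CommSemiring R] [Semiring A] [Algebra R A]

noncomputable def aeval (u : Aˣ) : R[T;T⁻¹] →ₐ[R] A :=
  AddMonoidAlgebra.lift R A ℤ ((Units.coeHom A).comp (zpowersHom Aˣ u))

@[simp]
theorem aeval_T (u : Aˣ) (m : ℤ) : aeval u (T m : R[T;T⁻¹]) = ↑(u ^ m) := by
  rw [aeval, T, AddMonoidAlgebra.lift_single]
  simp

theorem algHom_ext {f g : R[T;T⁻¹] →ₐ[R] A} (h : f (T 1) = g (T 1)) : f = g :=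
  AddMonoidAlgebra.algHom_ext' (MonoidHom.ext_mint h) (Subsingleton.elim _ _)

end LaurentPolynomial

namespace MvPolynomial

theorem aeval_eqOn_supported {σ R A : Type*} [CommSemiring R] [CommSemiring A] [Algebra R A]
    {s : Set σ} {f g : σ → A} (h : Set.EqOn f g s) :
    Set.EqOn (aeval f) (aeval g) (supported R s : Set (MvPolynomial σ R)) :=
  AlgHom.adjoin_le_equalizer (aeval f) (aeval g) (by rintro _ ⟨i, hi, rfl⟩; simp [h hi])

end MvPolynomial

namespace TriangularSystem

open MvPolynomial
open LaurentPolynomial (T)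
open scoped LaurentPolynomial
open Fin.NatCast

variable {R : Type*} [CommRing R] {n : ℕ} (e : ℕ → ℕ) (F : ℕ → MvPolynomial (Fin (n + 2)) R)

noncomputable def relation (k : ℕ) : MvPolynomial (Fin (n + 2)) R :=
  X 0 ^ e k * X ((k + 1 : ℕ) : Fin (n + 2)) - F k

noncomputable def ideal : Ideal (MvPolynomial (Fin (n + 2)) R) :=
  Ideal.span (relation e F '' Set.Icc 1 n)

abbrev LocalizedQuotient : Type _ :=
  Localization.Away (Ideal.Quotient.mk (ideal e F) (X 0))

noncomputable def toLocalizedQuotient : MvPolynomial (Fin (n + 2)) R →ₐ[R] LocalizedQuotient e F :=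
  (IsScalarTower.toAlgHom R _ (LocalizedQuotient e F)).comp (Ideal.Quotient.mkₐ R (ideal e F))

def IsTriangular : Prop :=
  ∀ k ∈ Set.Icc 1 n, F k ∈ supported R {i : Fin (n + 2) | (i : ℕ) ≤ k}

/-- The guard `(i : ℕ) ≤ k + 1` only makes the recursion well founded: for a triangular system it
does not change the value (`solution_succ`). -/
noncomputable def solution : ℕ → Polynomial R[T;T⁻¹]
  | 0 => Polynomial.C (T 1)
  | 1 => Polynomial.X
  | k + 2 => Polynomial.C (T (-e (k + 1))) *
      aeval (fun i : Fin (n + 2) ↦ if _ : (i : ℕ) ≤ k + 1 then solution i else 0) (F (k + 1))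
  decreasing_by omega

noncomputable def evalSolution : MvPolynomial (Fin (n + 2)) R →ₐ[R] Polynomial R[T;T⁻¹] :=
  aeval fun i ↦ solution e F i

theorem evalSolution_X (i : Fin (n + 2)) : evalSolution e F (X i) = solution e F i :=
  aeval_X _ _

variable {e F}

theorem solution_succ {k : ℕ} (hk : 1 ≤ k)
    (hFk : F k ∈ supported R {i : Fin (n + 2) | (i : ℕ) ≤ k}) :
    solution e F (k + 1) = Polynomial.C (T (-e k)) * evalSolution e F (F k) := by
  obtain ⟨k, rfl⟩ := Nat.exists_eq_add_of_le' hk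
  have htrunc : Set.EqOn (fun i : Fin (n + 2) ↦ if _ : (i : ℕ) ≤ k + 1 then solution e F i else 0)
      (fun i ↦ solution e F i) {i | (i : ℕ) ≤ k + 1} := fun i hi ↦ dif_pos hi
  rw [solution, aeval_eqOn_supported htrunc hFk, evalSolution]

theorem evalSolution_relation {k : ℕ} (hk : k ∈ Set.Icc 1 n)
    (hFk : F k ∈ supported R {i : Fin (n + 2) | (i : ℕ) ≤ k}) :
    evalSolution e F (relation e F k) = 0 := by
  have hval : (((k + 1 : ℕ) : Fin (n + 2)) : ℕ) = k + 1 := Fin.val_cast_of_lt (by grind)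
  rw [relation, map_sub, map_mul, map_pow, evalSolution_X, evalSolution_X, hval, Fin.val_zero,
    solution_succ hk.1 hFk, solution, ← mul_assoc, ← Polynomial.C_pow, ← Polynomial.C_mul,
    LaurentPolynomial.T_pow, mul_one, ← LaurentPolynomial.T_add, add_neg_cancel,
    LaurentPolynomial.T_zero, Polynomial.C_1, one_mul, sub_self]

theorem evalSolution_eq_zero_of_mem_ideal (hF : IsTriangular F) {p : MvPolynomial (Fin (n + 2)) R}
    (hp : p ∈ ideal e F) : evalSolution e F p = 0 := by
  refine (Ideal.span_le (I := RingHom.ker (evalSolution e F)) |>.2 ?_ hp)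
  rintro _ ⟨k, hk, rfl⟩
  exact evalSolution_relation hk (hF k hk)

variable (e) in
noncomputable def quotientToPolynomial (hF : IsTriangular F) :
    (MvPolynomial (Fin (n + 2)) R ⧸ ideal e F) →ₐ[R] Polynomial R[T;T⁻¹] :=
  Ideal.Quotient.liftₐ _ (evalSolution e F) fun _ ↦ evalSolution_eq_zero_of_mem_ideal hF

theorem quotientToPolynomial_mk (hF : IsTriangular F) (p : MvPolynomial (Fin (n + 2)) R) :
    quotientToPolynomial e hF (Ideal.Quotient.mk _ p) = evalSolution e F p :=
  Ideal.Quotient.liftₐ_apply _ _ _ _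

variable (e) in
noncomputable def toPolynomial (hF : IsTriangular F) :
    LocalizedQuotient e F →ₐ[R] Polynomial R[T;T⁻¹] :=
  IsLocalization.Away.liftAlgHom (Ideal.Quotient.mk (ideal e F) (X 0))
    (f := quotientToPolynomial e hF) <| by
    simpa [quotientToPolynomial_mk, evalSolution_X, solution] using
      (LaurentPolynomial.isUnit_T (R := R) 1).map Polynomial.C

theorem toPolynomial_toLocalizedQuotient (hF : IsTriangular F) (p : MvPolynomial (Fin (n + 2)) R) :
    toPolynomial e hF (toLocalizedQuotient e F p) = evalSolution e F p := by
  simp [toPolynomial, toLocalizedQuotient, quotientToPolynomial_mk]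

variable (e F)

noncomputable def unitX0 : (LocalizedQuotient e F)ˣ :=
  (IsLocalization.Away.algebraMap_isUnit (Ideal.Quotient.mk (ideal e F) (X 0))).unit

theorem coe_unitX0 : (unitX0 e F : LocalizedQuotient e F) = toLocalizedQuotient e F (X 0) :=
  IsUnit.unit_spec _

noncomputable def ofPolynomial : Polynomial R[T;T⁻¹] →ₐ[R] LocalizedQuotient e F :=
  Polynomial.aevalTower (LaurentPolynomial.aeval (unitX0 e F)) (toLocalizedQuotient e F (X 1))

theorem ofPolynomial_C_T (m : ℤ) :
    ofPolynomial e F (Polynomial.C (T m)) = ↑(unitX0 e F ^ m) := by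
  rw [ofPolynomial, Polynomial.aevalTower_C, LaurentPolynomial.aeval_T]

theorem ofPolynomial_X : ofPolynomial e F Polynomial.X = toLocalizedQuotient e F (X 1) :=
  Polynomial.aevalTower_X _ _

variable {e F}

theorem toLocalizedQuotient_relation {k : ℕ} (hk : k ∈ Set.Icc 1 n) :
    toLocalizedQuotient e F (relation e F k) = 0 := by
  have hmem : relation e F k ∈ ideal e F := Ideal.subset_span (Set.mem_image_of_mem _ hk)
  simp [toLocalizedQuotient, Ideal.Quotient.eq_zero_iff_mem.2 hmem]

theorem ofPolynomial_solution (hF : IsTriangular F) (i : ℕ) (hi : i ≤ n + 1) :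
    ofPolynomial e F (solution e F i) = toLocalizedQuotient e F (X (i : Fin (n + 2))) := by
  induction i using Nat.strong_induction_on with
  | _ i ih =>
  match i, hi with
  | 0, _ => rw [solution, ofPolynomial_C_T, zpow_one, coe_unitX0]; rfl
  | 1, _ => rw [solution, ofPolynomial_X]; rfl
  | k + 2, hk =>
    have hk' : k + 1 ∈ Set.Icc 1 n := ⟨by omega, by omega⟩
    have hF' :
        ofPolynomial e F (evalSolution e F (F (k + 1))) = toLocalizedQuotient e F (F (k + 1)) := by
      have hvars : Set.EqOn (fun i : Fin (n + 2) ↦ ofPolynomial e F (solution e F i))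
          (toLocalizedQuotient e F ∘ X) {i | (i : ℕ) ≤ k + 1} := fun i (hi : (i : ℕ) ≤ k + 1) ↦ by
        simp only [ih i (by omega) (by omega), Fin.cast_val_eq_self, Function.comp_apply]
      rw [evalSolution, ← AlgHom.comp_apply, comp_aeval, aeval_eqOn_supported hvars (hF _ hk'),
        ← aeval_unique]
    have hrel := toLocalizedQuotient_relation (e := e) (F := F) hk'
    rw [relation, map_sub, sub_eq_zero, map_mul, map_pow, ← coe_unitX0] at hrel
    rw [solution_succ hk'.1 (hF _ hk'), map_mul, ofPolynomial_C_T, hF', ← hrel, ← mul_assoc,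
      ← Units.val_pow_eq_pow_val, ← Units.val_mul, ← zpow_natCast, ← zpow_add, neg_add_cancel,
      zpow_zero, Units.val_one, one_mul]

theorem ofPolynomial_comp_toPolynomial (hF : IsTriangular F) :
    (ofPolynomial e F).comp (toPolynomial e hF) = AlgHom.id R (LocalizedQuotient e F) := by
  have h : ((ofPolynomial e F).comp (toPolynomial e hF)).comp (toLocalizedQuotient e F) =
      toLocalizedQuotient e F :=
    MvPolynomial.algHom_ext fun i ↦ by
      rw [AlgHom.comp_apply, AlgHom.comp_apply, toPolynomial_toLocalizedQuotient, evalSolution_X,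
        ofPolynomial_solution hF i i.is_le, Fin.cast_val_eq_self]
  exact IsLocalization.algHom_ext (Submonoid.powers (Ideal.Quotient.mk (ideal e F) (X 0)))
    (Ideal.Quotient.algHom_ext _ h)

theorem toPolynomial_comp_ofPolynomial (hF : IsTriangular F) :
    (toPolynomial e hF).comp (ofPolynomial e F) = AlgHom.id R (Polynomial R[T;T⁻¹]) := by
  refine Polynomial.algHom_ext' (LaurentPolynomial.algHom_ext ?_) ?_
  · simp [ofPolynomial_C_T, coe_unitX0, toPolynomial_toLocalizedQuotient, evalSolution_X, solution]
  · simp [ofPolynomial_X, toPolynomial_toLocalizedQuotient, evalSolution_X, solution]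

noncomputable def localizationEquiv (hF : IsTriangular F) :
    LocalizedQuotient e F ≃ₐ[R] Polynomial R[T;T⁻¹] :=
  AlgEquiv.ofAlgHom (toPolynomial e hF) (ofPolynomial e F)
    (toPolynomial_comp_ofPolynomial hF) (ofPolynomial_comp_toPolynomial hF)

end TriangularSystem

section KeySequence

open MvPolynomial
open Fin.NatCast

def keyExponent (ω : ℕ → ℤ) (k : ℕ) : ℕ :=
  ((alphaK ω k : ℤ) * ω k - ω (k + 1)).toNat

noncomputable def GhatRhs (n : ℕ) (ω : ℕ → ℤ) (θ : ℕ → ℂ) (β : ℕ → ℕ → ℤ) (k : ℕ) :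
    MvPolynomial (Fin (n + 2)) ℂ :=
  X ((k : ℕ) : Fin (n + 2)) ^ alphaK ω k -
    C (θ k) * ∏ j ∈ Finset.Ico 1 k, X ((j : ℕ) : Fin (n + 2)) ^ (β k j).toNat

theorem Ihat_eq_ideal (n : ℕ) (ω : ℕ → ℤ) (θ : ℕ → ℂ) (β : ℕ → ℕ → ℤ) :
    Ihat n ω θ β = TriangularSystem.ideal (keyExponent ω) (GhatRhs n ω θ β) :=
  rfl

theorem isTriangular_GhatRhs (n : ℕ) (ω : ℕ → ℤ) (θ : ℕ → ℂ) (β : ℕ → ℕ → ℤ) :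
    TriangularSystem.IsTriangular (GhatRhs n ω θ β) := by
  intro k _
  have hX : ∀ j ≤ k, X (j : Fin (n + 2)) ∈ supported ℂ {i : Fin (n + 2) | (i : ℕ) ≤ k} :=
    fun j hj ↦ X_mem_supported.2 ((Nat.mod_le _ _).trans hj)
  exact sub_mem (pow_mem (hX k le_rfl) _) <| mul_mem (Subalgebra.algebraMap_mem _ (θ k)) <|
    prod_mem fun j hj ↦ pow_mem (hX j (Finset.mem_Ico.1 hj).2.le) _

end KeySequence

theorem stmt5_general (n : ℕ) (ω : ℕ → ℤ) (θ : ℕ → ℂ) (β : ℕ → ℕ → ℤ) :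
    Nonempty
      (Localization.Away
          (Ideal.Quotient.mk (Ihat n ω θ β) (MvPolynomial.X (0 : Fin (n + 2)))) ≃ₐ[ℂ]
        Polynomial (LaurentPolynomial ℂ)) := by
  rw [Ihat_eq_ideal]
  exact ⟨TriangularSystem.localizationEquiv (isTriangular_GhatRhs n ω θ β)⟩

/-- The localization of `Â/Î` at the image of `ŵ` is isomorphic as a `ℂ`-algebra to
`ℂ[ŵ, ŵ⁻¹, ŷ₁]` (realized as `Polynomial (LaurentPolynomial ℂ)`). -/
theorem stmt5 (n : ℕ) (ω : ℕ → ℤ) (θ : ℕ → ℂ) (β : ℕ → ℕ → ℤ)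
    (hω : IsKeySequence n ω) (hprim : IsPrimitive n ω)
    (hθ : ∀ k, 1 ≤ k → k ≤ n → θ k ≠ 0) (hβ : IsRepTuple n ω β) :
    Nonempty
      (Localization.Away
          (Ideal.Quotient.mk (Ihat n ω θ β) (MvPolynomial.X (0 : Fin (n + 2)))) ≃ₐ[ℂ]
        Polynomial (LaurentPolynomial ℂ)) :=
  stmt5_general n ω θ β
end
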